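/- arXiv:math/0503227 — 2 statements merged into one kernel-verified Lean document; each statement's English description precedes it below -/
import Mathlib

section
/- Let z be the element of the group algebra of S_n given by the sum of all permutations with exactly n-r cycles, where 1 ≤ r < n. Then z equals the r-th elementary symmetric function of the Murphy elements R_2, ..., R_n, where R_i = Σ_{1≤j<i} (j,i). -/
open Finset

/-- The number of cycles of a permutation, including fixed points. -/
def numCycles {n : ℕ} (σ : Equiv.Perm (Fin n)) : ℕ :=
  σ.cycleType.card + (Finset.univ.filter fun i => σ i = i).card

/-- The Murphy element `R_i = ∑_{j<i} (j,i)` in the group algebra of `S_n`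
(indices `0,…,n-1`; `R_i` here corresponds to `R_{i+1}` in 1-indexed notation). -/
noncomputable def murphy (n : ℕ) (i : Fin n) : MonoidAlgebra ℤ (Equiv.Perm (Fin n)) :=
  ∑ j : Fin n, if j < i then MonoidAlgebra.single (Equiv.swap j i) 1 else 0

/-!
Jucys' recursion. Write `S_m ⊆ S_n` for the permutations fixing every point `> m` (1-indexed).
Both sides, restricted to `S_m` and to `R_2, …, R_m`, satisfy the recursion
`X_{m+1, r+1} = X_{m, r+1} + X_{m, r} R_{m+1}`: for the elementary symmetric functions this is
the usual splitting off of the largest index, since products are taken in increasing order.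
For permutations, `σ ∈ S_{m+1}` either fixes `m+1`, and then lies in `S_m`, or is uniquely
`σ' (j, m+1)` with `σ' = σ (σ⁻¹(m+1), m+1) ∈ S_m` and `j = σ⁻¹(m+1) ≤ m`; multiplying by a
transposition that moves a fixed point `m+1` of `σ'` glues `m+1` into the cycle of `j`, so `σ`
has exactly one cycle fewer than `σ'`.
-/

open Equiv Equiv.Perm MonoidAlgebra

section CycleMerge

variable {α : Type*} [Fintype α] [DecidableEq α]

theorem Equiv.Perm.IsCycle.mul_swap_of_apply_eq_self {c : Perm α} (hc : c.IsCycle) {j m : α}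
    (hj : c j ≠ j) (hm : c m = m) : (c * swap j m).IsCycle := by
  have hcj : c j ∈ c.support := mem_support.2 fun h => hj (c.injective h)
  -- `c * swap j m = swap m (c j) * c` is the cycle `(m, c j, c² j, …, j)`.
  have hform : c * swap j m = (m :: c.toList (c j)).formPerm := by
    obtain ⟨y, l, hl⟩ := List.exists_cons_of_ne_nil (toList_eq_nil_iff.not.2 (not_not.2 hcj))
    obtain rfl : y = c j := by simpa [hl] using toList_getElem_zero c _ hcj
    rw [hl, List.formPerm_cons_cons, ← hl, formPerm_toList, hc.cycleOf_eq (mem_support.1 hcj),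
      mul_swap_eq_swap_mul, hm, swap_comm]
  rw [hform]
  refine List.isCycle_formPerm (List.nodup_cons.2 ⟨fun hmem => ?_, nodup_toList _ _⟩) ?_
  · exact mem_support.1 ((mem_toList_iff.1 hmem).1.mem_support_iff.1 hcj) hm
  · rw [List.length_cons, length_toList]
    have := two_le_card_support_cycleOf_iff.2 (mem_support.1 hcj)
    omega

theorem filter_mul_swap_apply_eq_self {τ : Perm α} {j m : α} (hjm : j ≠ m) (hm : τ m = m) :
    univ.filter (fun x => (τ * swap j m) x = x) = univ.filter (fun x => τ x = x) \ {j, m} := by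
  ext x
  simp only [mem_filter, mem_univ, true_and, mem_sdiff, mem_insert, mem_singleton, mul_apply]
  rcases eq_or_ne x j with rfl | hxj
  · simp only [swap_apply_left, hm, true_or, not_true_eq_false, and_false, iff_false]
    exact hjm.symm
  rcases eq_or_ne x m with rfl | hxm
  · simp only [swap_apply_right, or_true, not_true_eq_false, and_false, iff_false]
    exact fun h => hjm (τ.injective (h.trans hm.symm))
  · simp [swap_apply_of_ne_of_ne hxj hxm, hxj, hxm]

theorem card_cycleType_mul_swap_of_apply_ne_self {τ : Perm α} {j m : α} (hj : τ j ≠ j)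
    (hm : τ m = m) :
    (τ * swap j m).cycleType.card = τ.cycleType.card := by
  set c := τ.cycleOf j
  have hc : c ∈ τ.cycleFactorsFinset := cycleOf_mem_cycleFactorsFinset_iff.2 (mem_support.2 hj)
  have hd : (τ * c⁻¹).Disjoint c := disjoint_mul_inv_of_mem_cycleFactorsFinset hc
  have hcj : c j ≠ j := by simpa [c] using hj
  have hcm : c m = m := by simp [c, cycleOf_apply, hm]
  have hjm : j ≠ m := by rintro rfl; exact hj hm
  have hd' : (τ * c⁻¹).Disjoint (c * swap j m) := by
    refine hd.mul_right ?_
    rw [disjoint_iff_disjoint_support, support_swap hjm]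
    have hdm : (τ * c⁻¹) m = m := by rw [mul_apply, inv_eq_iff_eq.2 hcm.symm, hm]
    simp [(hd j).resolve_right hcj, hdm]
  calc (τ * swap j m).cycleType.card = ((τ * c⁻¹) * (c * swap j m)).cycleType.card := by
        rw [← mul_assoc, inv_mul_cancel_right]
    _ = ((τ * c⁻¹) * c).cycleType.card := by
        rw [hd'.cycleType_mul, hd.cycleType_mul, Multiset.card_add, Multiset.card_add,
          card_cycleType_eq_one.2 ((isCycle_cycleOf τ hj).mul_swap_of_apply_eq_self hcj hcm),
          card_cycleType_eq_one.2 (isCycle_cycleOf τ hj)]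
    _ = τ.cycleType.card := by rw [inv_mul_cancel_right]

end CycleMerge

theorem numCycles_mul_swap {n : ℕ} {τ : Perm (Fin n)} {j m : Fin n} (hjm : j ≠ m)
    (hm : τ m = m) : numCycles (τ * swap j m) + 1 = numCycles τ := by
  have hmF : m ∈ univ.filter (fun x => τ x = x) := by simpa using hm
  unfold numCycles
  rw [filter_mul_swap_apply_eq_self hjm hm]
  by_cases hj : τ j = j
  · have hd : τ.Disjoint (swap j m) := by
      rw [disjoint_iff_disjoint_support, support_swap hjm]
      simp [hj, hm]
    have hsub : ({j, m} : Finset (Fin n)) ⊆ univ.filter (fun x => τ x = x) := by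
      simp [insert_subset_iff, hj, hm]
    have := card_pair hjm ▸ card_le_card hsub
    rw [hd.cycleType_mul, (isCycle_swap hjm).cycleType, Multiset.card_add,
      Multiset.card_singleton, card_sdiff_of_subset hsub, card_pair hjm]
    omega
  · rw [card_cycleType_mul_swap_of_apply_ne_self hj hm, sdiff_insert_of_notMem (by simpa using hj),
      card_sdiff_of_subset (singleton_subset_iff.2 hmF), card_singleton]
    have := card_pos.2 ⟨m, hmF⟩
    omega

theorem numCycles_one {n : ℕ} : numCycles (1 : Perm (Fin n)) = n := by
  simp [numCycles]

theorem numCycles_eq_iff {n : ℕ} {σ : Perm (Fin n)} : numCycles σ = n ↔ σ = 1 := by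
  refine ⟨fun h => ?_, fun h => h ▸ numCycles_one⟩
  by_contra hσ
  have hpos : 0 < σ.cycleType.card := card_cycleType_pos.2 hσ
  have htwo : σ.cycleType.card * 2 ≤ #σ.support := by
    simpa [sum_cycleType] using
      Multiset.card_nsmul_le_sum fun _ hx => two_le_of_mem_cycleType hx
  have hfix : univ.filter (fun x => σ x = x) = σ.supportᶜ := by
    ext; simp [mem_support]
  have := card_le_univ σ.support
  rw [numCycles, hfix, card_compl, Fintype.card_fin] at h
  simp only [Fintype.card_fin] at this
  omega

section OrderedESymm

variable {ι R : Type*} [LinearOrder ι] [Semiring R]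

theorem Finset.sort_insert_of_forall_lt {s : Finset ι} {a : ι} (h : ∀ b ∈ s, b < a) :
    (insert a s).sort (· ≤ ·) = s.sort (· ≤ ·) ++ [a] := by
  have hnd : (s.sort (· ≤ ·) ++ [a]).Nodup :=
    List.nodup_append.2 ⟨sort_nodup _ _, List.nodup_singleton a,
      fun b hb c hc => ((h b ((mem_sort _).1 hb)).trans_eq (List.mem_singleton.1 hc).symm).ne⟩
  have hsorted : (s.sort (· ≤ ·) ++ [a]).Pairwise (· ≤ ·) :=
    List.pairwise_append.2 ⟨pairwise_sort _ _, List.pairwise_singleton _ a,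
      fun b hb c hc => (h b ((mem_sort _).1 hb)).le.trans_eq (List.mem_singleton.1 hc).symm⟩
  simpa using (List.toFinset_sort (· ≤ ·) hnd).2 hsorted

def orderedESymm (f : ι → R) (s : Finset ι) (r : ℕ) : R :=
  ∑ S ∈ s.powersetCard r, ((S.sort (· ≤ ·)).map f).prod

theorem orderedESymm_zero (f : ι → R) (s : Finset ι) : orderedESymm f s 0 = 1 := by
  simp [orderedESymm]

theorem orderedESymm_empty_succ (f : ι → R) (k : ℕ) : orderedESymm f ∅ (k + 1) = 0 := by
  rw [orderedESymm, powersetCard_eq_empty.2 (by simp), sum_empty]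

theorem orderedESymm_insert_of_forall_lt (f : ι → R) {s : Finset ι} {a : ι}
    (h : ∀ b ∈ s, b < a) (k : ℕ) :
    orderedESymm f (insert a s) (k + 1) = orderedESymm f s (k + 1) + orderedESymm f s k * f a := by
  have ha : a ∉ s := fun ha => (h a ha).false
  have hinj : Set.InjOn (insert a) (s.powersetCard k : Set (Finset ι)) := fun S hS T hT hST => by
    rw [← erase_insert (fun haS => ha ((mem_powersetCard.1 hS).1 haS)), hST,
      erase_insert (fun haT => ha ((mem_powersetCard.1 hT).1 haT))]
  rw [orderedESymm, powersetCard_succ_insert ha, sum_union, sum_image hinj, orderedESymm,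
    orderedESymm, sum_mul]
  · congr 1
    refine sum_congr rfl fun S hS => ?_
    have hSs := (mem_powersetCard.1 hS).1
    rw [sort_insert_of_forall_lt fun b hb => h b (hSs hb), List.map_append, List.prod_append,
      List.map_singleton, List.prod_singleton]
  · refine disjoint_left.2 fun S hS hS' => ?_
    obtain ⟨T, -, rfl⟩ := mem_image.1 hS'
    exact ha ((mem_powersetCard.1 hS).1 (mem_insert_self a T))

end OrderedESymm

theorem murphy_eq_zero_of_val_eq_zero {n : ℕ} {i : Fin n} (hi : (i : ℕ) = 0) : murphy n i = 0 :=
  sum_eq_zero fun j _ => if_neg fun hj => by simp [Fin.lt_def, hi] at hj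

/-- The indices `1, …, m-1` of the Murphy elements `R_2, …, R_m`. -/
def murphyIndices (n m : ℕ) : Finset (Fin n) :=
  univ.filter fun i : Fin n => (i : ℕ) ≠ 0 ∧ (i : ℕ) < m

theorem orderedESymm_murphy_succ {n m : ℕ} (hm : m < n) (k : ℕ) :
    orderedESymm (murphy n) (murphyIndices n (m + 1)) (k + 1)
      = orderedESymm (murphy n) (murphyIndices n m) (k + 1)
        + orderedESymm (murphy n) (murphyIndices n m) k * murphy n ⟨m, hm⟩ := by
  rcases eq_or_ne m 0 with rfl | hm0
  · have hindices : murphyIndices n 1 = murphyIndices n 0 := by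
      ext i
      simp only [murphyIndices, mem_filter]
      omega
    rw [zero_add, hindices, murphy_eq_zero_of_val_eq_zero rfl, mul_zero, add_zero]
  · have hinsert : murphyIndices n (m + 1) = insert ⟨m, hm⟩ (murphyIndices n m) := by
      ext i
      simp only [murphyIndices, mem_filter, mem_univ, true_and, mem_insert, Fin.ext_iff]
      omega
    rw [hinsert]
    exact orderedESymm_insert_of_forall_lt _ (fun b hb => Fin.lt_def.2 (mem_filter.1 hb).2.2) k

/-- The sum of the permutations of `{0, …, m-1}` (as a subgroup of `S_n`) with `n - r` cycles. -/
noncomputable def cycleSum (n m r : ℕ) : MonoidAlgebra ℤ (Perm (Fin n)) :=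
  ∑ σ ∈ univ.filter (fun σ : Perm (Fin n) =>
    (∀ x : Fin n, m ≤ (x : ℕ) → σ x = x) ∧ numCycles σ + r = n), single σ 1

theorem cycleSum_zero_right (n m : ℕ) : cycleSum n m 0 = 1 := by
  have : univ.filter (fun σ : Perm (Fin n) =>
      (∀ x : Fin n, m ≤ (x : ℕ) → σ x = x) ∧ numCycles σ + 0 = n) = {1} := by
    ext σ
    simp only [mem_filter, mem_univ, true_and, add_zero, numCycles_eq_iff, mem_singleton]
    exact ⟨And.right, fun h => ⟨fun x _ => by simp [h], h⟩⟩
  rw [cycleSum, this, sum_singleton, MonoidAlgebra.one_def]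

theorem cycleSum_zero_succ (n k : ℕ) : cycleSum n 0 (k + 1) = 0 := by
  refine sum_eq_zero fun σ hσ => ?_
  obtain ⟨hfix, hcyc⟩ := (mem_filter.1 hσ).2
  obtain rfl : σ = 1 := Equiv.ext fun x => hfix x (Nat.zero_le _)
  rw [numCycles_one] at hcyc
  omega

theorem single_mul_murphy {n : ℕ} (σ : Perm (Fin n)) (a : Fin n) :
    single σ (1 : ℤ) * murphy n a = ∑ j ∈ univ.filter (· < a), single (σ * swap j a) 1 := by
  rw [murphy, mul_sum, sum_filter]
  simp only [mul_ite, mul_zero, single_mul_single, mul_one]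

theorem mul_swap_apply_eq_self_of_le {n m : ℕ} {σ : Perm (Fin n)} {i j : Fin n}
    (hσ : ∀ x : Fin n, m ≤ (x : ℕ) → σ x = x) (hi : (i : ℕ) < m) (hj : (j : ℕ) < m) :
    ∀ x : Fin n, m ≤ (x : ℕ) → (σ * swap i j) x = x := fun x hx => by
  rw [mul_apply, swap_apply_of_ne_of_ne (by rintro rfl; omega) (by rintro rfl; omega), hσ x hx]

theorem forall_le_apply_eq_self_succ_iff {n m : ℕ} (hm : m < n) {σ : Perm (Fin n)} :
    ((∀ x : Fin n, m + 1 ≤ (x : ℕ) → σ x = x) ∧ σ ⟨m, hm⟩ = ⟨m, hm⟩)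
      ↔ ∀ x : Fin n, m ≤ (x : ℕ) → σ x = x := by
  refine ⟨fun ⟨h, ha⟩ x hx => ?_, fun h => ⟨fun x hx => h x (by omega), h _ le_rfl⟩⟩
  rcases hx.eq_or_lt with hx | hx
  · obtain rfl : x = ⟨m, hm⟩ := Fin.ext hx.symm
    exact ha
  · exact h x hx

theorem sum_apply_ne_eq_cycleSum_mul_murphy {n m : ℕ} (hm : m < n) (k : ℕ) :
    ∑ σ ∈ univ.filter (fun σ : Perm (Fin n) =>
        ((∀ x : Fin n, m + 1 ≤ (x : ℕ) → σ x = x) ∧ numCycles σ + (k + 1) = n)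
          ∧ ¬σ ⟨m, hm⟩ = ⟨m, hm⟩), single σ 1
      = cycleSum n m k * murphy n ⟨m, hm⟩ := by
  set a : Fin n := ⟨m, hm⟩
  rw [cycleSum, sum_mul]
  simp_rw [single_mul_murphy]
  rw [← sum_product']
  refine sum_nbij' (fun σ => (σ * swap (σ⁻¹ a) a, σ⁻¹ a)) (fun p => p.1 * swap p.2 a)
    ?_ ?_ (fun σ _ => by simp [mul_assoc]) ?_ (fun σ _ => by simp [mul_assoc])
  · intro σ hσ
    simp only [mem_filter, mem_univ, true_and] at hσ
    obtain ⟨⟨hfix, hcyc⟩, hmove⟩ := hσ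
    set j := σ⁻¹ a
    have hσj : σ j = a := σ.apply_symm_apply a
    have hja : j ≠ a := fun h => hmove (h ▸ hσj)
    have hjm : (j : ℕ) < m := by
      by_contra! h
      rcases h.eq_or_lt with h | h
      · exact hja (Fin.ext h.symm)
      · exact hja ((hfix j h).symm.trans hσj)
    have hσ'a : (σ * swap j a) a = a := by rw [mul_apply, swap_apply_right, hσj]
    have hσ' := (forall_le_apply_eq_self_succ_iff hm).1
      ⟨mul_swap_apply_eq_self_of_le hfix (by omega) (by simp [a]), hσ'a⟩
    have := numCycles_mul_swap hja hσ'a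
    rw [mul_assoc, swap_mul_self, mul_one] at this
    simp only [mem_product, mem_filter, mem_univ, true_and]
    exact ⟨⟨hσ', by omega⟩, Fin.lt_def.2 hjm⟩
  · rintro ⟨σ', j⟩ hp
    simp only [mem_product, mem_filter, mem_univ, true_and] at hp
    obtain ⟨⟨hσ', hcyc⟩, hja⟩ := hp
    have hσ'a : σ' a = a := hσ' a le_rfl
    have := numCycles_mul_swap hja.ne hσ'a
    simp only [mem_filter, mem_univ, true_and]
    refine ⟨⟨mul_swap_apply_eq_self_of_le (fun x hx => hσ' x (by omega))
      (by have := Fin.lt_def.1 hja; simp [a] at this; omega) (by simp [a]), by omega⟩, ?_⟩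
    rw [mul_apply, swap_apply_right]
    exact fun h => hja.ne (σ'.injective (h.trans hσ'a.symm))
  · rintro ⟨σ', j⟩ hp
    simp only [mem_product, mem_filter, mem_univ, true_and] at hp
    have hinv : (σ' * swap j a)⁻¹ a = j := by
      rw [Perm.inv_eq_iff_eq, mul_apply, swap_apply_left, hp.1.1 a le_rfl]
    simp only [hinv, mul_assoc, swap_mul_self, mul_one]

theorem cycleSum_succ {n m : ℕ} (hm : m < n) (k : ℕ) :
    cycleSum n (m + 1) (k + 1) = cycleSum n m (k + 1) + cycleSum n m k * murphy n ⟨m, hm⟩ := by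
  rw [cycleSum, ← sum_filter_add_sum_filter_not _ (fun σ => σ ⟨m, hm⟩ = ⟨m, hm⟩), filter_filter,
    filter_filter, sum_apply_ne_eq_cycleSum_mul_murphy, cycleSum]
  congr 2
  ext σ
  rw [mem_filter, mem_filter, and_right_comm, forall_le_apply_eq_self_succ_iff]

theorem cycleSum_eq_orderedESymm_murphy {n m : ℕ} (hm : m ≤ n) (r : ℕ) :
    cycleSum n m r = orderedESymm (murphy n) (murphyIndices n m) r := by
  induction m generalizing r with
  | zero =>
    cases r with
    | zero => rw [cycleSum_zero_right, orderedESymm_zero]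
    | succ k =>
      rw [cycleSum_zero_succ, murphyIndices, filter_false_of_mem (fun i _ => by omega),
        orderedESymm_empty_succ]
  | succ m ih =>
    cases r with
    | zero => rw [cycleSum_zero_right, orderedESymm_zero]
    | succ k => rw [cycleSum_succ hm, orderedESymm_murphy_succ hm, ih (by omega), ih (by omega)]

theorem stmt5_general (n r : ℕ) (hrn : r < n) :
    (∑ σ : Equiv.Perm (Fin n),
        if numCycles σ = n - r then MonoidAlgebra.single σ (1 : ℤ) else 0)
      = ∑ S ∈ (Finset.univ.filter fun i : Fin n => (i : ℕ) ≠ 0).powersetCard r,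
          ((S.sort (· ≤ ·)).map (murphy n)).prod := by
  have hcycles : cycleSum n n r
      = ∑ σ : Perm (Fin n), if numCycles σ = n - r then single σ (1 : ℤ) else 0 := by
    rw [cycleSum, sum_filter]
    refine sum_congr rfl fun σ _ => if_congr ?_ rfl rfl
    exact ⟨fun h => by omega, fun h => ⟨fun x hx => absurd x.isLt (by omega), by omega⟩⟩
  have hindices : murphyIndices n n = univ.filter fun i : Fin n => (i : ℕ) ≠ 0 :=
    filter_congr fun i _ => and_iff_left i.isLt
  rw [← hcycles, cycleSum_eq_orderedESymm_murphy le_rfl, hindices, orderedESymm]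

/-- For `1 ≤ r < n`, the element of the group algebra of `S_n` given by the sum of all
permutations with exactly `n - r` cycles equals the `r`-th elementary symmetric function
of the Murphy elements `R_2, …, R_n` (the product over each `r`-subset being taken in
increasing order of index; the Murphy elements commute pairwise). -/
theorem stmt5 (n r : ℕ) (hr : 1 ≤ r) (hrn : r < n) :
    (∑ σ : Equiv.Perm (Fin n),
        if numCycles σ = n - r then MonoidAlgebra.single σ (1 : ℤ) else 0)
      = ∑ S ∈ (Finset.univ.filter fun i : Fin n => (i : ℕ) ≠ 0).powersetCard r,
          ((S.sort (· ≤ ·)).map (murphy n)).prod :=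
  stmt5_general n r hrn
end

section
/- Under Kerov's growth process, for any partition λ(n-1) of n-1 ≥ 1, the conditional expectation of X_n given λ(n-1) equals 0, i.e., Σ_{x addable to λ(n-1)} [dim(λ(n-1)+x)/(n·dim(λ(n-1)))]·c(x) = 0. -/
open Finset

/-- The Young diagram of a partition of `n` (rows sorted in decreasing order). -/
def toYD {n : ℕ} (p : n.Partition) : YoungDiagram :=
  YoungDiagram.ofRowLens (p.parts.sort (· ≥ ·)) (List.sortedGE_iff_pairwise.mpr (p.parts.pairwise_sort _))

/-- The content of a box in (0-indexed) row `c.1` and column `c.2`: column minus row. -/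
def content (c : ℕ × ℕ) : ℤ := (c.2 : ℤ) - c.1

/-- The hook length of a box: 1 + arm + leg. -/
def hook (μ : YoungDiagram) (c : ℕ × ℕ) : ℕ :=
  (μ.cells.filter (fun d => d.1 = c.1 ∧ c.2 < d.2)).card +
  (μ.cells.filter (fun d => d.2 = c.2 ∧ c.1 < d.1)).card + 1

/-- The dimension of the irreducible representation of `S_n` indexed by `μ`,
given by the hook length formula `n! / ∏ h(x)`. -/
def dimSYT (μ : YoungDiagram) : ℚ :=
  (Nat.factorial μ.card : ℚ) / ∏ c ∈ μ.cells, (hook μ c : ℚ)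

/-- The Plancherel measure of a partition `μ` of `n`: `dim(μ)² / n!`. -/
def plancherel (n : ℕ) (μ : YoungDiagram) : ℚ := dimSYT μ ^ 2 / n.factorial

/-!
Write `ℓᵢ = λᵢ + (m - 1 - i)` for the shifted row lengths of `μ`, where `m` exceeds the number of
rows. The hook length formula takes the Frobenius form
`dim λ = |λ|! ∏_{a<b} (ℓ_a - ℓ_b) / ∏_a ℓ_a!`, so adding a cell in row `i` (which raises `ℓᵢ` by
one) has transition probability `∏_{j≠i} (ℓᵢ + 1 - ℓⱼ) / ((ℓᵢ + 1) ∏_{j≠i} (ℓᵢ - ℓⱼ))`, while the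
content of the new cell is `ℓᵢ + 1 - m`; rows where no cell can be added give a vanishing
probability. The expected content is then `∑ᵢ N(vᵢ) / ∏_{j≠i} (vᵢ - vⱼ)` over the nodes
`v = (ℓ₀, …, ℓ_{m-1}, -1)` with `N(z) = (z + 1 - m) ∏ⱼ (z + 1 - ℓⱼ)`. By Lagrange interpolation such
a sum is the sum of the nodes minus the sum of the roots of `N`, which is `0`; the node `-1`
contributes nothing since `ℓ_{m-1} = 0`.
-/

section Interpolation

open Polynomial

variable {K ι : Type*} [Field K] [DecidableEq ι]

theorem sum_prod_sub_div_prod_sub {s : Finset ι} (hs : s.Nonempty) {v : ι → K}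
    (hv : Set.InjOn v s) (u : ι → K) :
    ∑ i ∈ s, (∏ j ∈ s, (v i - u j)) / ∏ j ∈ s.erase i, (v i - v j)
      = ∑ j ∈ s, v j - ∑ j ∈ s, u j := by
  set N : K[X] := ∏ j ∈ s, (X - C (u j))
  set D : K[X] := ∏ j ∈ s, (X - C (v j))
  have hN : N.Monic := monic_prod_X_sub_C u s
  have hD : D.Monic := monic_prod_X_sub_C v s
  have hNdeg : N.degree = #s := by
    rw [degree_eq_natDegree hN.ne_zero, natDegree_finsetProd_X_sub_C_eq_card]
  have hDdeg : D.degree = #s := by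
    rw [degree_eq_natDegree hD.ne_zero, natDegree_finsetProd_X_sub_C_eq_card]
  have hdeg : (N - D).degree < #s := hNdeg ▸ degree_sub_lt_left (hNdeg.trans hDdeg.symm)
    hN.ne_zero (hN.leadingCoeff.trans hD.leadingCoeff.symm)
  have hcoeff := Lagrange.coeff_eq_sum hv hdeg
  rw [coeff_sub, prod_X_sub_C_coeff_card_pred s u hs.card_pos,
    prod_X_sub_C_coeff_card_pred s v hs.card_pos, neg_sub_neg] at hcoeff
  rw [hcoeff]
  refine sum_congr rfl fun i hi => ?_
  simp [N, D, eval_prod, prod_eq_zero hi]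

/-- For `x = ℓ`, the `i`-th summand is the probability of adding a cell in row `i` times the
content of that cell. -/
theorem sum_prod_add_one_sub_div_mul_eq_zero {m : ℕ} {x : ℕ → K} (hx : Set.InjOn x (range m))
    (hx_ne : ∀ j < m, x j ≠ -1) {k : ℕ} (hk : k < m) (hxk : x k = 0) :
    ∑ i ∈ range m, (∏ j ∈ (range m).erase i, (x i + 1 - x j)) /
      ((x i + 1) * ∏ j ∈ (range m).erase i, (x i - x j)) * (x i + 1 - m) = 0 := by
  set v : ℕ → K := fun j => if j < m then x j else -1
  set u : ℕ → K := fun j => if j < m then x j - 1 else m - 1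
  have hv : Set.InjOn v (range (m + 1)) := by
    intro a ha b hb hab
    simp only [coe_range, Set.mem_Iio] at ha hb
    by_cases h1 : a < m <;> by_cases h2 : b < m <;> simp only [v, h1, h2, if_true, if_false] at hab
    · exact hx (by simpa using h1) (by simpa using h2) hab
    · exact absurd hab (hx_ne a h1)
    · exact absurd hab.symm (hx_ne b h2)
    · omega
  have key := sum_prod_sub_div_prod_sub nonempty_range_add_one hv u
  have hsum : ∑ j ∈ range (m + 1), v j - ∑ j ∈ range (m + 1), u j = 0 := by
    simp only [sum_range_succ, v, u, lt_irrefl, if_false]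
    rw [sum_congr rfl fun j hj => if_pos (mem_range.mp hj),
      sum_congr rfl fun j hj => if_pos (mem_range.mp hj), sum_sub_distrib]
    simp
  rw [hsum, sum_range_succ, prod_eq_zero (mem_range.mpr (hk.trans m.lt_succ_self))
    (by simp [v, u, hk, hxk]), zero_div, add_zero] at key
  rw [← key]
  refine sum_congr rfl fun i hi => ?_
  have hi : i < m := mem_range.mp hi
  have hnum : ∏ j ∈ range (m + 1), (v i - u j)
      = (∏ j ∈ (range m).erase i, (x i + 1 - x j)) * (x i + 1 - m) := by
    rw [prod_range_succ, ← mul_prod_erase _ _ (mem_range.mpr hi)]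
    simp only [v, u, hi, if_true, lt_irrefl, if_false]
    rw [prod_congr rfl fun j hj => by
      rw [if_pos (mem_range.mp (mem_of_mem_erase hj)), sub_sub_eq_add_sub]]
    ring
  have hden : ∏ j ∈ (range (m + 1)).erase i, (v i - v j)
      = (x i + 1) * ∏ j ∈ (range m).erase i, (x i - x j) := by
    rw [range_add_one, erase_insert_of_ne hi.ne', prod_insert (by simp)]
    simp only [v, hi, if_true, lt_irrefl, if_false, sub_neg_eq_add]
    congr 1
    exact prod_congr rfl fun j hj => by rw [if_pos (mem_range.mp (mem_of_mem_erase hj))]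
  rw [hnum, hden, div_mul_eq_mul_div]

end Interpolation

section PairDifferences

variable {R : Type*} [CommRing R]

theorem prod_prod_Ico_sub_eq {m i : ℕ} (hi : i < m) (f : ℕ → R) :
    ∏ a ∈ range m, ∏ b ∈ Ico (a + 1) m, (f a - f b) =
      (-1) ^ i * (∏ j ∈ (range m).erase i, (f i - f j)) *
        ∏ a ∈ (range m).erase i, ∏ b ∈ (Ico (a + 1) m).erase i, (f a - f b) := by
  have hrow : ∀ a ∈ range m, ∏ b ∈ Ico (a + 1) m, (f a - f b) =
      (if a < i then f a - f i else 1) * ∏ b ∈ (Ico (a + 1) m).erase i, (f a - f b) := by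
    intro a ha
    split_ifs with hai
    · exact (mul_prod_erase _ _ (mem_Ico.mpr ⟨hai, hi⟩)).symm
    · rw [erase_eq_of_notMem (by simp [mem_Ico]; omega), one_mul]
  have hbefore : ∏ a ∈ range m, (if a < i then f a - f i else 1)
      = (-1) ^ i * ∏ j ∈ range i, (f i - f j) := by
    have hneg := prod_neg (s := range i) fun j => f i - f j
    rw [card_range] at hneg
    rw [← prod_filter, show {a ∈ range m | a < i} = range i by ext; simp; omega, ← hneg]
    exact prod_congr rfl fun _ _ => (neg_sub _ _).symm
  have hafter : ∏ j ∈ (range m).erase i, (f i - f j)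
      = (∏ j ∈ range i, (f i - f j)) * ∏ j ∈ Ico (i + 1) m, (f i - f j) := by
    rw [show (range m).erase i = range i ∪ Ico (i + 1) m by ext; simp; omega,
      prod_union (disjoint_left.mpr fun a ha hb => by simp at ha hb; omega)]
  rw [prod_congr rfl hrow, prod_mul_distrib, hbefore, hafter,
    ← mul_prod_erase _ _ (mem_range.mpr hi), erase_eq_of_notMem (by simp)]
  ring

theorem prod_prod_Ico_sub_mul_eq {m i : ℕ} (hi : i < m) {f g : ℕ → R}
    (hfg : ∀ j, j ≠ i → f j = g j) :
    (∏ a ∈ range m, ∏ b ∈ Ico (a + 1) m, (f a - f b)) * ∏ j ∈ (range m).erase i, (g i - g j) =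
      (∏ a ∈ range m, ∏ b ∈ Ico (a + 1) m, (g a - g b)) * ∏ j ∈ (range m).erase i, (f i - f j) := by
  have hrest : ∏ a ∈ (range m).erase i, ∏ b ∈ (Ico (a + 1) m).erase i, (f a - f b)
      = ∏ a ∈ (range m).erase i, ∏ b ∈ (Ico (a + 1) m).erase i, (g a - g b) :=
    prod_congr rfl fun a ha => prod_congr rfl fun b hb => by
      rw [hfg a (ne_of_mem_erase ha), hfg b (ne_of_mem_erase hb)]
  rw [prod_prod_Ico_sub_eq hi f, prod_prod_Ico_sub_eq hi g, hrest]
  ring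

end PairDifferences

namespace YoungDiagram

variable (ν : YoungDiagram)

@[to_additive]
theorem prod_cells_eq_prod_rows {M : Type*} [CommMonoid M] {m : ℕ} (hm : ν.colLen 0 ≤ m)
    (f : ℕ × ℕ → M) : ∏ c ∈ ν.cells, f c = ∏ i ∈ range m, ∏ k ∈ range (ν.rowLen i), f (i, k) := by
  rw [← prod_fiberwise_of_maps_to (g := Prod.fst) (t := range m) fun c hc => mem_range.mpr
    ((mem_iff_lt_colLen.mp (ν.up_left_mem le_rfl (Nat.zero_le c.2) ((mem_cells c).mp hc))).trans_le
      hm)]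
  refine prod_congr rfl fun i _ => ?_
  rw [← row, row_eq_prod, prod_product, prod_singleton]

theorem sum_rowLens : ν.rowLens.sum = ν.card := by
  rw [rowLens, ← Multiset.sum_coe, ← Multiset.map_coe, ← Multiset.range, ← range_val,
    ← Finset.sum, YoungDiagram.card, card_eq_sum_ones, ν.sum_cells_eq_sum_rows le_rfl]
  simp

def toPartition {n : ℕ} (h : ν.card = n) : n.Partition where
  parts := ν.rowLens
  parts_pos hi := ν.pos_of_mem_rowLens _ (Multiset.mem_coe.mp hi)
  parts_sum := by rw [Multiset.sum_coe, sum_rowLens, h]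

theorem hook_eq (i k : ℕ) :
    hook ν (i, k) = (ν.rowLen i - (k + 1)) + (ν.colLen k - (i + 1)) + 1 := by
  have harm : ν.cells.filter (fun d => d.1 = i ∧ k < d.2) = {i} ×ˢ Ico (k + 1) (ν.rowLen i) := by
    ext ⟨a, b⟩
    simp only [mem_filter, mem_cells, mem_product, mem_singleton, mem_Ico]
    constructor
    · rintro ⟨h, rfl, hb⟩
      exact ⟨rfl, hb, mem_iff_lt_rowLen.mp h⟩
    · rintro ⟨rfl, hb, h⟩
      exact ⟨mem_iff_lt_rowLen.mpr h, rfl, hb⟩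
  have hleg : ν.cells.filter (fun d => d.2 = k ∧ i < d.1) = Ico (i + 1) (ν.colLen k) ×ˢ {k} := by
    ext ⟨a, b⟩
    simp only [mem_filter, mem_cells, mem_product, mem_singleton, mem_Ico]
    constructor
    · rintro ⟨h, rfl, ha⟩
      exact ⟨⟨ha, mem_iff_lt_colLen.mp h⟩, rfl⟩
    · rintro ⟨⟨ha, h⟩, rfl⟩
      exact ⟨mem_iff_lt_colLen.mpr h, rfl, ha⟩
  simp only [hook, harm, hleg, card_product, card_singleton, Nat.card_Ico, one_mul, mul_one]

/-- Only used for `i < m`, where `m - 1 - i` does not truncate. -/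
def shiftedRowLen (m i : ℕ) : ℕ := ν.rowLen i + (m - 1 - i)

theorem shiftedRowLen_lt {m a b : ℕ} (hab : a < b) (hb : b < m) :
    ν.shiftedRowLen m b < ν.shiftedRowLen m a := by
  have := ν.rowLen_anti a b hab.le
  unfold shiftedRowLen
  omega

theorem shiftedRowLen_injOn (m : ℕ) : Set.InjOn (ν.shiftedRowLen m) (Set.Iio m) :=
  StrictAntiOn.injOn fun _ _ _ hb hab => ν.shiftedRowLen_lt hab hb

theorem image_shiftedRowLen_Ico_subset (m i : ℕ) :
    (Ico (i + 1) m).image (ν.shiftedRowLen m) ⊆ range (ν.shiftedRowLen m i) := by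
  intro t ht
  obtain ⟨j, hj, rfl⟩ := mem_image.mp ht
  rw [mem_Ico] at hj
  exact mem_range.mpr (ν.shiftedRowLen_lt (by omega) hj.2)

/-- `ℓᵢ` minus the hook length of `(i, k)`. Over the row these values, together with the `ℓⱼ`
for `i < j < m`, exactly fill `{0, …, ℓᵢ - 1}`; this is the row-by-row hook length formula. -/
def hookCompl (m i k : ℕ) : ℕ := k + #{j ∈ Ico (i + 1) m | ν.rowLen j ≤ k}

variable {ν}

theorem hook_add_hookCompl {m i k : ℕ} (hm : ν.colLen 0 ≤ m) (hc : (i, k) ∈ ν) :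
    hook ν (i, k) + ν.hookCompl m i k = ν.shiftedRowLen m i := by
  have hk : ν.colLen k ≤ m := (ν.colLen_anti 0 k k.zero_le).trans hm
  have hi : i < ν.colLen k := mem_iff_lt_colLen.mp hc
  have hik : k < ν.rowLen i := mem_iff_lt_rowLen.mp hc
  have hlong : {j ∈ Ico (i + 1) m | ¬ν.rowLen j ≤ k} = Ico (i + 1) (ν.colLen k) := by
    ext j
    simp only [mem_filter, mem_Ico, not_le, ← mem_iff_lt_rowLen, mem_iff_lt_colLen]
    omega
  have hsplit := card_filter_add_card_filter_not (s := Ico (i + 1) m) (fun j => ν.rowLen j ≤ k)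
  rw [hlong, Nat.card_Ico, Nat.card_Ico] at hsplit
  rw [hook_eq, hookCompl, shiftedRowLen]
  omega

theorem hookCompl_strictMono (m i : ℕ) : StrictMono (ν.hookCompl m i) := by
  intro k₁ k₂ hk
  have : #{j ∈ Ico (i + 1) m | ν.rowLen j ≤ k₁} ≤ #{j ∈ Ico (i + 1) m | ν.rowLen j ≤ k₂} :=
    card_le_card (monotone_filter_right _ fun j _ (h : ν.rowLen j ≤ k₁) => h.trans hk.le)
  unfold hookCompl
  omega

theorem hookCompl_ne_shiftedRowLen {m i j : ℕ} (hij : i < j) (hj : j < m) (k : ℕ) :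
    ν.hookCompl m i k ≠ ν.shiftedRowLen m j := by
  unfold hookCompl shiftedRowLen
  by_cases h : ν.rowLen j ≤ k
  · have : Ico j m ⊆ {j' ∈ Ico (i + 1) m | ν.rowLen j' ≤ k} := fun j' hj' => by
      rw [mem_Ico] at hj'
      exact mem_filter.mpr ⟨mem_Ico.mpr ⟨by omega, hj'.2⟩, (ν.rowLen_anti j j' hj'.1).trans h⟩
    have := card_le_card this
    rw [Nat.card_Ico] at this
    omega
  · have : {j' ∈ Ico (i + 1) m | ν.rowLen j' ≤ k} ⊆ Ico (j + 1) m := fun j' hj' => by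
      rw [mem_filter, mem_Ico] at hj'
      refine mem_Ico.mpr ⟨?_, hj'.1.2⟩
      by_contra hc
      exact h ((ν.rowLen_anti j' j (by omega)).trans hj'.2)
    have := card_le_card this
    rw [Nat.card_Ico] at this
    omega

theorem image_hookCompl {m i : ℕ} (hm : ν.colLen 0 ≤ m) (hi : i < m) :
    (range (ν.rowLen i)).image (ν.hookCompl m i)
      = range (ν.shiftedRowLen m i) \ (Ico (i + 1) m).image (ν.shiftedRowLen m) := by
  refine eq_of_subset_of_card_le (fun t ht => ?_) ?_
  · obtain ⟨k, hk, rfl⟩ := mem_image.mp ht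
    have hc : (i, k) ∈ ν := mem_iff_lt_rowLen.mpr (mem_range.mp hk)
    refine mem_sdiff.mpr ⟨mem_range.mpr ?_, fun h => ?_⟩
    · have := hook_add_hookCompl hm hc
      have : 0 < hook ν (i, k) := Nat.succ_pos _
      omega
    · obtain ⟨j, hj, hjk⟩ := mem_image.mp h
      rw [mem_Ico] at hj
      exact hookCompl_ne_shiftedRowLen hj.1 hj.2 k hjk.symm
  · rw [card_sdiff_of_subset (ν.image_shiftedRowLen_Ico_subset m i),
      card_image_of_injOn ((ν.shiftedRowLen_injOn m).mono fun _ hj => (mem_Ico.mp hj).2),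
      card_image_of_injective _ (hookCompl_strictMono m i).injective, card_range, card_range,
      Nat.card_Ico, shiftedRowLen]
    omega

theorem prod_hook_row_mul_prod_sub {m i : ℕ} (hm : ν.colLen 0 ≤ m) (hi : i < m) :
    (∏ k ∈ range (ν.rowLen i), hook ν (i, k)) *
      ∏ j ∈ Ico (i + 1) m, (ν.shiftedRowLen m i - ν.shiftedRowLen m j)
      = (ν.shiftedRowLen m i).factorial := by
  have hhook : ∏ k ∈ range (ν.rowLen i), hook ν (i, k)
      = ∏ t ∈ (range (ν.rowLen i)).image (ν.hookCompl m i), (ν.shiftedRowLen m i - t) := by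
    rw [prod_image (hookCompl_strictMono m i).injective.injOn]
    refine prod_congr rfl fun k hk => ?_
    have := hook_add_hookCompl hm (mem_iff_lt_rowLen.mpr (mem_range.mp hk))
    omega
  rw [hhook, ← prod_image (f := fun t => ν.shiftedRowLen m i - t)
      ((ν.shiftedRowLen_injOn m).mono fun _ hj => (mem_Ico.mp hj).2),
    image_hookCompl hm hi, prod_sdiff (ν.image_shiftedRowLen_Ico_subset m i),
    ← prod_range_add_one_eq_factorial, ← prod_range_reflect]
  exact prod_congr rfl fun t ht => by have := mem_range.mp ht; omega

theorem prod_hook_mul_prod_sub {m : ℕ} (hm : ν.colLen 0 ≤ m) :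
    (∏ c ∈ ν.cells, hook ν c) *
      ∏ a ∈ range m, ∏ b ∈ Ico (a + 1) m, (ν.shiftedRowLen m a - ν.shiftedRowLen m b)
      = ∏ i ∈ range m, (ν.shiftedRowLen m i).factorial := by
  rw [ν.prod_cells_eq_prod_rows hm, ← prod_mul_distrib]
  exact prod_congr rfl fun i hi => prod_hook_row_mul_prod_sub hm (mem_range.mp hi)

variable (ν)

theorem prod_prod_Ico_shiftedRowLen_sub_ne_zero (m : ℕ) :
    ∏ a ∈ range m, ∏ b ∈ Ico (a + 1) m,
      ((ν.shiftedRowLen m a : ℚ) - ν.shiftedRowLen m b) ≠ 0 :=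
  prod_ne_zero_iff.mpr fun a _ => prod_ne_zero_iff.mpr fun b hb => by
    have := ν.shiftedRowLen_lt (mem_Ico.mp hb).1 (mem_Ico.mp hb).2
    exact sub_ne_zero.mpr (by exact_mod_cast this.ne')

theorem dimSYT_eq {m : ℕ} (hm : ν.colLen 0 ≤ m) :
    dimSYT ν = ν.card.factorial *
      (∏ a ∈ range m, ∏ b ∈ Ico (a + 1) m, ((ν.shiftedRowLen m a : ℚ) - ν.shiftedRowLen m b)) /
      ∏ i ∈ range m, ((ν.shiftedRowLen m i).factorial : ℚ) := by
  have h : (∏ c ∈ ν.cells, (hook ν c : ℚ)) *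
      ∏ a ∈ range m, ∏ b ∈ Ico (a + 1) m, ((ν.shiftedRowLen m a : ℚ) - ν.shiftedRowLen m b)
      = ∏ i ∈ range m, ((ν.shiftedRowLen m i).factorial : ℚ) := by
    have hcast := congrArg (Nat.cast : ℕ → ℚ) (ν.prod_hook_mul_prod_sub hm)
    simp only [Nat.cast_mul, Nat.cast_prod] at hcast
    have hsub : ∏ a ∈ range m, ∏ b ∈ Ico (a + 1) m,
        ((ν.shiftedRowLen m a - ν.shiftedRowLen m b : ℕ) : ℚ)
        = ∏ a ∈ range m, ∏ b ∈ Ico (a + 1) m, ((ν.shiftedRowLen m a : ℚ) - ν.shiftedRowLen m b) :=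
      prod_congr rfl fun a _ => prod_congr rfl fun b hb =>
        Nat.cast_sub (ν.shiftedRowLen_lt (mem_Ico.mp hb).1 (mem_Ico.mp hb).2).le
    rwa [hsub] at hcast
  rw [dimSYT, ← h, mul_div_mul_right _ _ (ν.prod_prod_Ico_shiftedRowLen_sub_ne_zero m)]

end YoungDiagram

theorem rowLens_toYD {n : ℕ} (q : n.Partition) : (toYD q).rowLens = q.parts.sort (· ≥ ·) :=
  YoungDiagram.rowLens_ofRowLens_eq_self fun _ hx => q.parts_pos ((Multiset.mem_sort _).mp hx)

theorem toYD_injective {n : ℕ} : Function.Injective (toYD (n := n)) := by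
  intro q₁ q₂ h
  have h := congrArg YoungDiagram.rowLens h
  rw [rowLens_toYD, rowLens_toYD] at h
  exact Nat.Partition.ext <| by
    rw [← Multiset.sort_eq q₁.parts (· ≥ ·), ← Multiset.sort_eq q₂.parts (· ≥ ·), h]

theorem card_toYD {n : ℕ} (q : n.Partition) : (toYD q).card = n := by
  rw [← YoungDiagram.sum_rowLens, rowLens_toYD, ← Multiset.sum_coe, Multiset.sort_eq, q.parts_sum]

theorem toYD_toPartition (ν : YoungDiagram) {n : ℕ} (h : ν.card = n) :
    toYD (ν.toPartition h) = ν := by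
  unfold toYD
  convert YoungDiagram.ofRowLens_to_rowLens_eq_self (μ := ν) using 2
  exact List.Perm.eq_of_pairwise' (Multiset.pairwise_sort _ _)
    (List.sortedGE_iff_pairwise.mp ν.rowLens_sorted) (Multiset.coe_eq_coe.mp (Multiset.sort_eq _ _))

namespace YoungDiagram

variable (μ : YoungDiagram)

def addableRows : Finset ℕ :=
  {i ∈ range (μ.colLen 0 + 1) | i = 0 ∨ μ.rowLen i < μ.rowLen (i - 1)}

theorem mk_rowLen_notMem (i : ℕ) : (i, μ.rowLen i) ∉ μ := by
  simp [mem_iff_lt_rowLen]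

variable {μ} {i m : ℕ}

theorem lt_of_mem_addableRows (hi : i ∈ μ.addableRows) : i < μ.colLen 0 + 1 :=
  mem_range.mp (mem_filter.mp hi).1

def addBox (i : ℕ) (hi : i ∈ μ.addableRows) : YoungDiagram where
  cells := insert (i, μ.rowLen i) μ.cells
  isLowerSet := by
    rintro ⟨a, b⟩ ⟨a', b'⟩ ⟨ha : a' ≤ a, hb : b' ≤ b⟩ h
    simp only [coe_insert, Set.mem_insert_iff, mem_coe, mem_cells, Prod.mk.injEq] at h ⊢
    rcases h with ⟨rfl, rfl⟩ | h
    · rcases ha.lt_or_eq with ha | rfl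
      · right
        have hadd := (mem_filter.mp hi).2
        have := μ.rowLen_anti a' (a - 1) (by omega)
        exact mem_iff_lt_rowLen.mpr (by omega)
      · rcases hb.lt_or_eq with hb | rfl
        · exact Or.inr (mem_iff_lt_rowLen.mpr hb)
        · exact Or.inl ⟨rfl, rfl⟩
    · exact Or.inr (μ.up_left_mem ha hb h)

theorem cells_addBox (hi : i ∈ μ.addableRows) :
    (μ.addBox i hi).cells = insert (i, μ.rowLen i) μ.cells :=
  rfl

theorem mem_addBox (hi : i ∈ μ.addableRows) {c : ℕ × ℕ} :
    c ∈ μ.addBox i hi ↔ c = (i, μ.rowLen i) ∨ c ∈ μ := by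
  rw [← mem_cells, cells_addBox, mem_insert, mem_cells]

theorem card_addBox (hi : i ∈ μ.addableRows) : (μ.addBox i hi).card = μ.card + 1 :=
  card_insert_of_notMem ((mem_cells _).not.mpr (μ.mk_rowLen_notMem i))

theorem rowLen_addBox (hi : i ∈ μ.addableRows) (j : ℕ) :
    (μ.addBox i hi).rowLen j = if j = i then μ.rowLen i + 1 else μ.rowLen j := by
  refine eq_of_forall_lt_iff fun k => ?_
  rw [← mem_iff_lt_rowLen, mem_addBox, mem_iff_lt_rowLen, Prod.mk.injEq]
  split_ifs with h
  · subst h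
    omega
  · omega

theorem colLen_addBox_le (hi : i ∈ μ.addableRows) :
    (μ.addBox i hi).colLen 0 ≤ μ.colLen 0 + 1 := by
  have := lt_of_mem_addableRows hi
  by_contra! h
  rcases (mem_addBox hi).mp (mem_iff_lt_colLen.mpr h) with h | h
  · simp only [Prod.mk.injEq] at h
    omega
  · have := mem_iff_lt_colLen.mp h
    omega

theorem addBox_inj {j : ℕ} (hi : i ∈ μ.addableRows) (hj : j ∈ μ.addableRows)
    (h : μ.addBox i hi = μ.addBox j hj) : i = j := by
  have hmem : (i, μ.rowLen i) ∈ μ.addBox j hj := h ▸ (mem_addBox hi).mpr (Or.inl rfl)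
  rcases (mem_addBox hj).mp hmem with h | h
  · exact (Prod.mk.inj h).1
  · exact absurd h (μ.mk_rowLen_notMem i)

theorem exists_eq_addBox {ν : YoungDiagram} (hle : μ ≤ ν) (hcard : ν.card = μ.card + 1) :
    ∃ i, ∃ hi : i ∈ μ.addableRows, ν = μ.addBox i hi := by
  obtain ⟨⟨a, b⟩, hx⟩ : ∃ x, ν.cells \ μ.cells = {x} := card_eq_one.mp <| by
    rw [card_sdiff_of_subset (cells_subset_iff.mpr hle)]
    exact Nat.sub_eq_of_eq_add' hcard
  have hnew : ∀ c ∈ ν, c ∉ μ → c = (a, b) := fun c hc hc' =>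
    mem_singleton.mp (hx ▸ mem_sdiff.mpr ⟨(mem_cells c).mpr hc, (mem_cells c).not.mpr hc'⟩)
  obtain ⟨hab, habμ⟩ : (a, b) ∈ ν ∧ (a, b) ∉ μ := by
    have := mem_singleton_self (a, b)
    rwa [← hx, mem_sdiff, mem_cells, mem_cells] at this
  have hb : b = μ.rowLen a := by
    have hle : μ.rowLen a ≤ b := not_lt.mp (mt mem_iff_lt_rowLen.mpr habμ)
    have := hnew _ (ν.up_left_mem le_rfl hle hab) (μ.mk_rowLen_notMem a)
    exact (Prod.mk.inj this).2.symm
  subst hb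
  have ha : a = 0 ∨ μ.rowLen a < μ.rowLen (a - 1) := by
    refine or_iff_not_imp_left.mpr fun ha => mem_iff_lt_rowLen.mp ?_
    by_contra h
    have := hnew _ (ν.up_left_mem (Nat.sub_le a 1) le_rfl hab) h
    simp only [Prod.mk.injEq] at this
    omega
  have ha' : a ∈ μ.addableRows := by
    refine mem_filter.mpr ⟨mem_range.mpr ?_, ha⟩
    rcases ha with rfl | ha
    · omega
    · have := mem_iff_lt_colLen.mp (mem_iff_lt_rowLen.mpr ((Nat.zero_le _).trans_lt ha))
      omega
  refine ⟨a, ha', YoungDiagram.ext ?_⟩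
  ext c
  rw [mem_cells, mem_cells, mem_addBox]
  refine ⟨fun hc => or_iff_not_imp_right.mpr (hnew c hc), ?_⟩
  rintro (rfl | hc)
  exacts [hab, hle hc]

theorem shiftedRowLen_addBox (hi : i ∈ μ.addableRows) (j : ℕ) :
    (μ.addBox i hi).shiftedRowLen m j =
      if j = i then μ.shiftedRowLen m i + 1 else μ.shiftedRowLen m j := by
  simp only [shiftedRowLen, rowLen_addBox]
  split_ifs with h
  · subst h
    omega
  · rfl

theorem dimSYT_addBox_div (hm : μ.colLen 0 < m) (hi : i ∈ μ.addableRows) :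
    dimSYT (μ.addBox i hi) / ((μ.card + 1) * dimSYT μ) =
      (∏ j ∈ (range m).erase i, ((μ.shiftedRowLen m i : ℚ) + 1 - μ.shiftedRowLen m j)) /
        (((μ.shiftedRowLen m i : ℚ) + 1) *
          ∏ j ∈ (range m).erase i, ((μ.shiftedRowLen m i : ℚ) - μ.shiftedRowLen m j)) := by
  have him : i < m := (lt_of_mem_addableRows hi).trans_le hm
  have hF : ∏ j ∈ range m, (((μ.addBox i hi).shiftedRowLen m j).factorial : ℚ) =
      ((μ.shiftedRowLen m i : ℚ) + 1) * ∏ j ∈ range m, ((μ.shiftedRowLen m j).factorial : ℚ) := by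
    rw [← mul_prod_erase _ _ (mem_range.mpr him), ← mul_prod_erase _ _ (mem_range.mpr him),
      prod_congr rfl fun j hj => by rw [shiftedRowLen_addBox hi, if_neg (ne_of_mem_erase hj)],
      shiftedRowLen_addBox hi, if_pos rfl, Nat.factorial_succ]
    push_cast
    ring
  have hQ := μ.prod_prod_Ico_shiftedRowLen_sub_ne_zero m
  rw [dimSYT_eq _ ((colLen_addBox_le hi).trans hm), dimSYT_eq μ hm.le, card_addBox, hF,
    Nat.factorial_succ]
  have hpair := prod_prod_Ico_sub_mul_eq him
    (f := fun j => ((μ.addBox i hi).shiftedRowLen m j : ℚ)) (g := fun j => μ.shiftedRowLen m j)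
    fun j hj => by simp [shiftedRowLen_addBox hi, hj]
  have hE' : ∏ j ∈ (range m).erase i,
      (((μ.addBox i hi).shiftedRowLen m i : ℚ) - (μ.addBox i hi).shiftedRowLen m j)
      = ∏ j ∈ (range m).erase i, ((μ.shiftedRowLen m i : ℚ) + 1 - μ.shiftedRowLen m j) :=
    prod_congr rfl fun j hj => by simp [shiftedRowLen_addBox hi, ne_of_mem_erase hj]
  have hE : ∏ j ∈ (range m).erase i, ((μ.shiftedRowLen m i : ℚ) - μ.shiftedRowLen m j) ≠ 0 :=
    prod_ne_zero_iff.mpr fun j hj => sub_ne_zero.mpr <| Nat.cast_injective.ne fun h =>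
      ne_of_mem_erase hj ((μ.shiftedRowLen_injOn m) him (mem_range.mp (mem_of_mem_erase hj)) h).symm
  simp only [hE'] at hpair
  push_cast
  field_simp
  linear_combination hpair

variable (μ)

theorem content_rowLen_eq (hi : i < m) :
    ((content (i, μ.rowLen i) : ℤ) : ℚ) = μ.shiftedRowLen m i + 1 - m := by
  rw [content, shiftedRowLen]
  push_cast [Nat.cast_sub (Nat.le_sub_one_of_lt hi), Nat.cast_sub (Nat.one_le_of_lt hi)]
  ring

theorem sum_transition_mul_content_eq_zero :
    ∑ i ∈ μ.addableRows.attach, dimSYT (μ.addBox i i.2) / ((μ.card + 1) * dimSYT μ) *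
      ((content (i, μ.rowLen i) : ℤ) : ℚ) = 0 := by
  set m := μ.colLen 0 + 1
  set ℓ : ℕ → ℚ := fun j => μ.shiftedRowLen m j
  let g : ℕ → ℚ := fun i => (∏ j ∈ (range m).erase i, (ℓ i + 1 - ℓ j)) /
    ((ℓ i + 1) * ∏ j ∈ (range m).erase i, (ℓ i - ℓ j)) * (ℓ i + 1 - m)
  have hterm : ∀ i ∈ μ.addableRows.attach, dimSYT (μ.addBox i i.2) / ((μ.card + 1) * dimSYT μ) *
      ((content (i, μ.rowLen i) : ℤ) : ℚ) = g i := fun i _ => by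
    rw [dimSYT_addBox_div (Nat.lt_succ_self _) i.2,
      content_rowLen_eq μ (lt_of_mem_addableRows i.2)]
  have hzero : ∀ i ∈ range m, i ∉ μ.addableRows → g i = 0 := by
    intro i hi hi'
    have hi0 : i ≠ 0 ∧ μ.rowLen i = μ.rowLen (i - 1) := by
      have := μ.rowLen_anti (i - 1) i (Nat.sub_le i 1)
      by_contra h
      exact hi' (mem_filter.mpr ⟨hi, by omega⟩)
    have hprev : μ.shiftedRowLen m (i - 1) = μ.shiftedRowLen m i + 1 := by
      have := mem_range.mp hi
      unfold shiftedRowLen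
      omega
    simp only [g]
    have hmem : i - 1 ∈ (range m).erase i :=
      mem_erase.mpr ⟨by omega, mem_range.mpr ((Nat.sub_le i 1).trans_lt (mem_range.mp hi))⟩
    rw [prod_eq_zero hmem (by simp [ℓ, hprev]), zero_div, zero_mul]
  have hlast : ℓ (μ.colLen 0) = 0 := by
    have : μ.rowLen (μ.colLen 0) = 0 := Nat.eq_zero_of_not_pos fun h =>
      (mem_iff_lt_colLen.mp (mem_iff_lt_rowLen.mpr h)).false
    simp [ℓ, shiftedRowLen, m, this]
  rw [sum_congr rfl hterm, sum_attach μ.addableRows g,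
    sum_subset (fun i hi => mem_range.mpr (lt_of_mem_addableRows hi)) hzero]
  exact sum_prod_add_one_sub_div_mul_eq_zero
    (Nat.cast_injective.comp_injOn ((μ.shiftedRowLen_injOn m).mono fun _ hj => mem_range.mp hj))
    (fun j _ => by have : (0 : ℚ) ≤ ℓ j := Nat.cast_nonneg _; linarith) (Nat.lt_succ_self _) hlast

end YoungDiagram

/-- Under Kerov's growth process, for any partition `μ` of `n - 1 ≥ 1`, the conditional
expectation of `X_n` given `λ(n-1) = μ` equals `0`:
`∑_{x addable to μ} [dim(μ+x)/(n·dim(μ))]·c(x) = 0`. -/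
theorem stmt10 (n : ℕ) (hn : 2 ≤ n) (μ : YoungDiagram) (hμ : μ.card = n - 1) :
    ∑ q : n.Partition,
      (if μ.cells ⊆ (toYD q).cells then
        dimSYT (toYD q) / (n * dimSYT μ) *
          ((∑ c ∈ (toYD q).cells \ μ.cells, content c : ℤ) : ℚ)
      else 0)
      = 0 := by
  have hn' : μ.card + 1 = n := by omega
  rw [← sum_filter, ← μ.sum_transition_mul_content_eq_zero]
  symm
  refine sum_bij
    (fun i _ => (μ.addBox i i.2).toPartition ((YoungDiagram.card_addBox i.2).trans hn'))
    (fun i _ => ?_) (fun i _ j _ h => ?_) (fun q hq => ?_) (fun i _ => ?_)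
  · rw [mem_filter, toYD_toPartition, YoungDiagram.cells_addBox]
    exact ⟨mem_univ _, subset_insert _ _⟩
  · have h := congrArg toYD h
    rw [toYD_toPartition, toYD_toPartition] at h
    exact Subtype.ext (YoungDiagram.addBox_inj i.2 j.2 h)
  · obtain ⟨i, hi, h⟩ := YoungDiagram.exists_eq_addBox
      (YoungDiagram.cells_subset_iff.mp (mem_filter.mp hq).2) ((card_toYD q).trans hn'.symm)
    exact ⟨⟨i, hi⟩, mem_attach _ _, toYD_injective (by rw [toYD_toPartition, h])⟩
  · rw [toYD_toPartition, YoungDiagram.cells_addBox, insert_sdiff_cancel (μ.mk_rowLen_notMem i),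
      sum_singleton, ← hn']
    push_cast
    rfl
end
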